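/- arXiv:1412.6239 — 3 statements merged into one kernel-verified Lean document; each statement's English description precedes it below -/
import Mathlib

section
/- For positive integers n, k, r, the mixed Stirling numbers satisfy the recurrence B(n,k,r) = B(n-1,k,r-1) + (k-1)·B(n-1,k-1,r) + (k-1+r)·B(n-1,k,r). -/
open Finset Function

/-- The cells of a mixed configuration: `c i` mutually indistinguishable cells of type `i`,
cells of different types being distinguishable. -/
abbrev MixedCell {k : ℕ} (c : Fin k → ℕ) : Type := (i : Fin k) × Fin (c i)

/-- Two distributions of balls into cells are identified iff they differ by a
type-preserving permutation of the cells. -/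
def mixedRel {n k : ℕ} (c : Fin k → ℕ) (f g : Fin n → MixedCell c) : Prop :=
  ∃ σ : Equiv.Perm (MixedCell c), (∀ x, (σ x).1 = x.1) ∧ g = σ ∘ f

/-- Number of distributions of `n` distinct balls into the configuration `c`,
empty cells allowed. -/
noncomputable def mixedCount₀ (n : ℕ) {k : ℕ} (c : Fin k → ℕ) : ℕ :=
  Nat.card (Quot (mixedRel (n := n) c))

/-- Number of distributions of `n` distinct balls into the configuration `c`,
all cells non-empty. -/
noncomputable def mixedCount (n : ℕ) {k : ℕ} (c : Fin k → ℕ) : ℕ :=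
  Nat.card (Quot fun (f g : {f : Fin n → MixedCell c // Function.Surjective f}) =>
    mixedRel c f.1 g.1)

/-- The Stirling number of the second kind: partitions of `n` labeled elements into
`k` non-empty unlabeled blocks. -/
noncomputable def stirling (n k : ℕ) : ℕ := mixedCount n (fun _ : Fin 1 => k)

/-- `mixedB n k r`: distributions of `n` distinct balls into `r` unlabeled cells together
with `k - 1` labeled cells, all cells non-empty. -/
noncomputable def mixedB (n k r : ℕ) : ℕ :=
  mixedCount n (fun i : Fin k => if i.val = 0 then r else 1)

/-- `mixedB₀ n k r`: distributions of `n` distinct balls into `r` unlabeled cells together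
with `k - 1` labeled cells, empty cells allowed. -/
noncomputable def mixedB₀ (n k r : ℕ) : ℕ :=
  mixedCount₀ n (fun i : Fin k => if i.val = 0 then r else 1)

-- The type-preserving subgroup
def mixedSubgroup {k : ℕ} (c : Fin k → ℕ) : Subgroup (Equiv.Perm (MixedCell c)) where
  carrier := {σ | ∀ x, (σ x).1 = x.1}
  one_mem' := fun _ => rfl
  mul_mem' := by
    intro σ τ hσ hτ x
    simpa [Equiv.Perm.mul_apply, hτ x] using hσ (τ x)
  inv_mem' := by
    intro σ hσ x
    have := hσ (σ⁻¹ x)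
    simpa using this.symm

abbrev SurjFun (n : ℕ) {k : ℕ} (c : Fin k → ℕ) : Type :=
  {f : Fin n → MixedCell c // Function.Surjective f}

noncomputable instance mixedAction (n : ℕ) {k : ℕ} (c : Fin k → ℕ) :
    MulAction (mixedSubgroup c) (SurjFun n c) where
  smul σ f := ⟨σ.1 ∘ f.1, σ.1.surjective.comp f.2⟩
  one_smul f := Subtype.ext (funext fun _ => rfl)
  mul_smul σ τ f := Subtype.ext (funext fun _ => rfl)

lemma mixed_smul_def {n k : ℕ} {c : Fin k → ℕ} (σ : mixedSubgroup c) (f : SurjFun n c) :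
    (σ • f).1 = σ.1 ∘ f.1 := rfl

lemma mixed_stabilizer_bot {n k : ℕ} {c : Fin k → ℕ} (f : SurjFun n c) :
    MulAction.stabilizer (mixedSubgroup c) f = ⊥ := by
  ext σ
  simp only [MulAction.mem_stabilizer_iff, Subgroup.mem_bot]
  constructor
  · intro h
    have h' : σ.1 ∘ f.1 = f.1 := congrArg Subtype.val h
    ext1
    apply Equiv.ext
    intro y
    obtain ⟨x, rfl⟩ := f.2 y
    exact congrFun h' x
  · rintro rfl; exact Subtype.ext (funext fun _ => rfl)

lemma mixedRel_iff_orbitRel {n k : ℕ} {c : Fin k → ℕ} (f g : SurjFun n c) :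
    mixedRel c f.1 g.1 ↔ Setoid.r (self := MulAction.orbitRel (mixedSubgroup c) (SurjFun n c)) f g := by
  rw [MulAction.orbitRel_apply, MulAction.mem_orbit_iff]
  constructor
  · rintro ⟨σ, hσ, hg⟩
    refine ⟨(⟨σ, hσ⟩ : mixedSubgroup c)⁻¹, ?_⟩
    apply Subtype.ext
    rw [mixed_smul_def]
    funext x
    simp [hg]
  · rintro ⟨σ, hσ⟩
    refine ⟨(σ⁻¹ : mixedSubgroup c).1, (σ⁻¹ : mixedSubgroup c).2, ?_⟩
    have := congrArg Subtype.val hσ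
    rw [mixed_smul_def] at this
    funext x
    simp [← this]

-- orbit counting
set_option maxHeartbeats 1000000 in
lemma card_surjFun_eq {n k : ℕ} (c : Fin k → ℕ) :
    Nat.card (SurjFun n c) = mixedCount n c * Nat.card (mixedSubgroup c) := by
  classical
  set G := mixedSubgroup c
  set X := SurjFun n c
  have e1 : X ≃ Σ ω : Quotient (MulAction.orbitRel G X), G ⧸ MulAction.stabilizer G ω.out :=
    MulAction.selfEquivSigmaOrbitsQuotientStabilizer G X
  have e3 : ∀ ω : Quotient (MulAction.orbitRel G X),
      (G ⧸ MulAction.stabilizer G (Quotient.out ω)) ≃ G := fun ω =>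
    (Subgroup.quotientEquivOfEq (mixed_stabilizer_bot ω.out)).trans
      QuotientGroup.quotientBot.toEquiv
  have e2 : X ≃ (Quotient (MulAction.orbitRel G X)) × G :=
    e1.trans <| (Equiv.sigmaCongrRight e3).trans (Equiv.sigmaEquivProd _ _)
  rw [Nat.card_congr e2, Nat.card_prod]
  congr 1
  exact Nat.card_congr (Quot.congrRight fun f g => (mixedRel_iff_orbitRel f g)).symm

theorem tst : True := trivial

lemma mixedSubgroup_eq_range {k : ℕ} (c : Fin k → ℕ) :
    mixedSubgroup c = (Equiv.Perm.sigmaCongrRightHom fun i => Fin (c i)).range := by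
  ext σ
  constructor
  · intro hσ
    have hc : ∀ x : MixedCell c, c (σ x).1 = c x.1 := fun x => congrArg c (hσ x)
    set F0 : ∀ i : Fin k, Fin (c i) → Fin (c i) :=
      fun i j => Fin.cast (hc ⟨i, j⟩) (σ ⟨i, j⟩).2 with hF0
    have hinj : ∀ i, Function.Injective (F0 i) := by
      intro i j j' h
      have hv : ((σ ⟨i, j⟩).2 : ℕ) = ((σ ⟨i, j'⟩).2 : ℕ) := congrArg Fin.val h
      have : σ ⟨i, j⟩ = σ ⟨i, j'⟩ := by
        apply Sigma.ext
        · rw [hσ ⟨i, j⟩, hσ ⟨i, j'⟩]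
        · rw [Fin.heq_ext_iff (by rw [hc ⟨i,j⟩, hc ⟨i,j'⟩])]
          exact hv
      exact eq_of_heq (Sigma.mk.inj_iff.mp (σ.injective this)).2
    have hbij : ∀ i, Function.Bijective (F0 i) :=
      fun i => Finite.injective_iff_bijective.mp (hinj i)
    refine ⟨fun i => Equiv.ofBijective (F0 i) (hbij i), ?_⟩
    apply Equiv.ext
    rintro ⟨i, j⟩
    have h1 : (σ ⟨i, j⟩).1 = i := hσ ⟨i, j⟩
    apply Sigma.ext
    · exact h1.symm
    · show HEq (F0 i j) (σ ⟨i, j⟩).2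
      rw [Fin.heq_ext_iff (by rw [hc ⟨i,j⟩])]
      rfl
  · rintro ⟨F, rfl⟩
    intro x
    rfl

lemma card_mixedSubgroup {k : ℕ} (c : Fin k → ℕ) :
    Nat.card (mixedSubgroup c) = ∏ i, (c i).factorial := by
  classical
  rw [mixedSubgroup_eq_range,
    Nat.card_congr (MonoidHom.ofInjective (Equiv.Perm.sigmaCongrRightHom_injective
      (β := fun i => Fin (c i)))).toEquiv.symm, Nat.card_pi]
  congr 1
  funext i
  rw [Nat.card_eq_fintype_card, Fintype.card_perm, Fintype.card_fin]

noncomputable def surjCount (n m : ℕ) : ℕ := Nat.card {f : Fin n → Fin m // Surjective f}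

def surjEquiv {α β γ δ : Type*} (e : α ≃ γ) (e' : β ≃ δ) :
    {f : α → β // Surjective f} ≃ {f : γ → δ // Surjective f} :=
  Equiv.subtypeEquiv (Equiv.arrowCongr e e') fun f =>
    ⟨fun h => (e'.surjective.comp h).comp e.symm.surjective,
     fun h => by simpa [Function.comp_def] using (e'.symm.surjective.comp h).comp e.surjective⟩

lemma mixedCount_mul {n k : ℕ} (c : Fin k → ℕ) :
    mixedCount n c * ∏ i, (c i).factorial = surjCount n (∑ i, c i) := by
  rw [← card_mixedSubgroup, ← card_surjFun_eq, surjCount]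
  exact Nat.card_congr (surjEquiv (Equiv.refl _)
    (Fintype.equivFinOfCardEq (by simp [Fintype.card_sigma])))

noncomputable def optionSurjEquiv {α β : Type*} :
    {f : Option α → β // Surjective f} ≃
      Σ b : β, ({g : α → β // Surjective g} ⊕ {g : α → {x : β // x ≠ b} // Surjective g}) where
  toFun f :=
    haveI := Classical.propDecidable (∀ a, f.1 (some a) ≠ f.1 none)
    ⟨f.1 none,
      if h : ∀ a, f.1 (some a) ≠ f.1 none then
        .inr ⟨fun a => ⟨f.1 (some a), h a⟩, by
          rintro ⟨y, hy⟩
          obtain ⟨x, hx⟩ := f.2 y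
          match x, hx with
          | none, hx => exact absurd hx.symm hy
          | some a, hx => exact ⟨a, Subtype.ext hx⟩⟩
      else
        .inl ⟨fun a => f.1 (some a), by
          push_neg at h
          obtain ⟨a0, ha0⟩ := h
          intro y
          obtain ⟨x, hx⟩ := f.2 y
          match x, hx with
          | none, hx => exact ⟨a0, ha0.trans hx⟩
          | some a, hx => exact ⟨a, hx⟩⟩⟩
  invFun s :=
    match s with
    | ⟨b, .inl g⟩ => ⟨fun o => o.elim b g.1, by
        intro y
        obtain ⟨a, ha⟩ := g.2 y
        exact ⟨some a, ha⟩⟩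
    | ⟨b, .inr g⟩ => ⟨fun o => o.elim b (fun a => (g.1 a).1), by
        intro y
        by_cases hy : y = b
        · exact ⟨none, hy.symm⟩
        · obtain ⟨a, ha⟩ := g.2 ⟨y, hy⟩
          exact ⟨some a, congrArg Subtype.val ha⟩⟩
  left_inv f := by
    by_cases h : ∀ a, f.1 (some a) ≠ f.1 none
    · dsimp only
      rw [dif_pos h]
      exact Subtype.ext (funext fun o => by cases o <;> rfl)
    · dsimp only
      rw [dif_neg h]
      exact Subtype.ext (funext fun o => by cases o <;> rfl)
  right_inv s := by
    rcases s with ⟨b, g | g⟩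
    · have h : ¬ ∀ a, (fun o : Option α => o.elim b g.1) (some a)
          ≠ (fun o : Option α => o.elim b g.1) none := by
        push_neg
        exact g.2 b
      dsimp only
      rw [dif_neg h]
      exact Sigma.ext rfl (heq_of_eq (congrArg Sum.inl (Subtype.ext rfl)))
    · have h : ∀ a, (fun o : Option α => o.elim b (fun a => (g.1 a).1)) (some a)
          ≠ (fun o : Option α => o.elim b (fun a => (g.1 a).1)) none :=
        fun a => (g.1 a).2
      dsimp only
      rw [dif_pos h]
      exact Sigma.ext rfl (heq_of_eq (congrArg Sum.inr (Subtype.ext (funext fun a =>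
        Subtype.ext rfl))))

lemma surjCount_rec (n m : ℕ) :
    surjCount (n + 1) (m + 1) = (m + 1) * (surjCount n (m + 1) + surjCount n m) := by
  classical
  have e1 : {f : Fin (n+1) → Fin (m+1) // Surjective f} ≃
      Σ b : Fin (m+1), ({g : Fin n → Fin (m+1) // Surjective g}
        ⊕ {g : Fin n → {x : Fin (m+1) // x ≠ b} // Surjective g}) :=
    (surjEquiv (finSuccEquiv n) (Equiv.refl _)).trans optionSurjEquiv
  have e2 : ∀ b : Fin (m+1), {x : Fin (m+1) // x ≠ b} ≃ Fin m :=
    fun b => (finSuccAboveEquiv b).symm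
  have e3 : {f : Fin (n+1) → Fin (m+1) // Surjective f} ≃
      Fin (m+1) × ({g : Fin n → Fin (m+1) // Surjective g}
        ⊕ {g : Fin n → Fin m // Surjective g}) :=
    e1.trans <| (Equiv.sigmaCongrRight fun b => Equiv.sumCongr (Equiv.refl _)
      (surjEquiv (Equiv.refl _) (e2 b))).trans (Equiv.sigmaEquivProd _ _)
  rw [surjCount, Nat.card_congr e3, Nat.card_prod, Nat.card_sum, Nat.card_eq_fintype_card,
    Fintype.card_fin]
  rfl

lemma mixedB_fact (n r k' : ℕ) :
    mixedB n (k' + 1) r * r.factorial = surjCount n (r + k') := by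
  have h1 : ∏ i : Fin (k' + 1), (if (i : ℕ) = 0 then r else 1).factorial = r.factorial := by
    simp [Fin.prod_univ_succ]
  have h2 : ∑ i : Fin (k' + 1), (if (i : ℕ) = 0 then r else 1) = r + k' := by
    simp [Fin.sum_univ_succ]
  have h := mixedCount_mul (n := n) (fun i : Fin (k' + 1) => if (i : ℕ) = 0 then r else 1)
  rw [h1, h2] at h
  exact h

theorem mixedB_recurrence (n k r : ℕ) (hn : 0 < n) (hk : 0 < k) (hr : 0 < r) :
    mixedB n k r = mixedB (n - 1) k (r - 1) + (k - 1) * mixedB (n - 1) (k - 1) r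
      + (k - 1 + r) * mixedB (n - 1) k r := by
  obtain ⟨n', rfl⟩ : ∃ n', n = n' + 1 := ⟨n - 1, by omega⟩
  obtain ⟨k', rfl⟩ : ∃ k', k = k' + 1 := ⟨k - 1, by omega⟩
  obtain ⟨r', rfl⟩ : ∃ r', r = r' + 1 := ⟨r - 1, by omega⟩
  simp only [Nat.add_sub_cancel]
  set m := r' + k' with hm
  apply Nat.eq_of_mul_eq_mul_right (Nat.factorial_pos (r' + 1))
  have hL : mixedB (n' + 1) (k' + 1) (r' + 1) * (r' + 1).factorial
      = surjCount (n' + 1) (m + 1) := by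
    rw [mixedB_fact]
    congr 1
    omega
  have hA : mixedB n' (k' + 1) r' * (r' + 1).factorial = (r' + 1) * surjCount n' m := by
    rw [Nat.factorial_succ, show mixedB n' (k' + 1) r' * ((r' + 1) * r'.factorial)
      = (r' + 1) * (mixedB n' (k' + 1) r' * r'.factorial) by ring, mixedB_fact]
  have hB : k' * mixedB n' k' (r' + 1) * (r' + 1).factorial = k' * surjCount n' m := by
    cases k' with
    | zero => simp
    | succ k'' =>
      rw [mul_assoc, mixedB_fact]
      congr 2
      omega
  have hC : (k' + (r' + 1)) * mixedB n' (k' + 1) (r' + 1) * (r' + 1).factorial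
      = (m + 1) * surjCount n' (m + 1) := by
    rw [mul_assoc, mixedB_fact, show r' + 1 + k' = m + 1 by omega, show k' + (r' + 1) = m + 1
      by omega]
  rw [hL, surjCount_rec]
  conv_rhs => rw [Nat.add_mul, Nat.add_mul, hA, hB, hC, ← add_mul,
    show r' + 1 + k' = m + 1 by omega]
  ring
end

section
/- For positive integers n > r, the r-Stirling numbers satisfy S_r(n,k) = S_{r-1}(n,k) - (r-1)·S_{r-1}(n-1,k). -/
open Finset

/-- The `r`-Stirling number of the second kind: partitions of `{0,…,n-1}` into `k`
non-empty blocks such that the first `r` elements lie in distinct blocks. -/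
noncomputable def rStirling (n k r : ℕ) : ℕ :=
  Nat.card (Quot fun (f g : {f : Fin n → Fin k // Function.Surjective f ∧
      ∀ i j : Fin n, i.val < r → j.val < r → f i = f j → i = j}) =>
    ∃ σ : Equiv.Perm (Fin k), g.1 = σ ∘ f.1)


namespace RStirlingAux

/-- Functions realizing an `r`-restricted surjection. -/
abbrev A (n k r : ℕ) : Type :=
  {f : Fin n → Fin k // Function.Surjective f ∧
      ∀ i j : Fin n, i.val < r → j.val < r → f i = f j → i = j}

def R {n k r : ℕ} (f g : A n k r) : Prop :=
  ∃ σ : Equiv.Perm (Fin k), g.1 = σ ∘ f.1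

theorem rStirling_eq (n k r : ℕ) :
    Nat.card (Quot fun (f g : {f : Fin n → Fin k // Function.Surjective f ∧
      ∀ i j : Fin n, i.val < r → j.val < r → f i = f j → i = j}) =>
      ∃ σ : Equiv.Perm (Fin k), g.1 = σ ∘ f.1) = Nat.card (Quot (@R n k r)) := rfl

instance (n k r : ℕ) : Finite (Quot (@R n k r)) :=
  Finite.of_surjective (Quot.mk _) (Quot.exists_rep)

/-- Skip index `m`. -/
def skip (m : ℕ) {n : ℕ} (j : Fin n) : Fin (n + 1) :=
  if j.val < m then ⟨j.val, by omega⟩ else ⟨j.val + 1, by omega⟩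

lemma skip_val_lt {m n : ℕ} (j : Fin n) (h : j.val < m) : (skip m j).val = j.val := by
  simp [skip, h]

lemma skip_val_ge {m n : ℕ} (j : Fin n) (h : ¬ j.val < m) : (skip m j).val = j.val + 1 := by
  simp [skip, h]

lemma skip_ne {m n : ℕ} (j : Fin n) : (skip m j).val ≠ m := by
  unfold skip; split <;> simp <;> omega

lemma skip_inj {m n : ℕ} : Function.Injective (skip m (n := n)) := by
  intro a b hab
  have := congrArg Fin.val hab
  unfold skip at this
  split at this <;> split at this <;> simp at this <;> exact Fin.ext (by omega)

lemma skip_surj {m n : ℕ} (hmn : m ≤ n) (x : Fin (n + 1)) (hx : x.val ≠ m) :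
    ∃ j : Fin n, skip m j = x := by
  rcases lt_or_gt_of_ne hx with hlt | hgt
  · exact ⟨⟨x.val, by omega⟩, Fin.ext (skip_val_lt _ hlt)⟩
  · refine ⟨⟨x.val - 1, by omega⟩, Fin.ext ?_⟩
    rw [skip_val_ge] <;> simp <;> omega

def res {k : ℕ} (m : ℕ) {n : ℕ} (f : Fin (n + 1) → Fin k) : Fin n → Fin k :=
  fun j => f (skip m j)

def ext {k : ℕ} {n : ℕ} (m : ℕ) (hm : m ≤ n) (i : ℕ) (hi : i < n) (g : Fin n → Fin k) :
    Fin (n + 1) → Fin k :=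
  fun x => if hx : x.val < m then g ⟨x.val, by omega⟩
    else if hx2 : x.val = m then g ⟨i, hi⟩
    else g ⟨x.val - 1, by have := x.isLt; omega⟩

variable {k n : ℕ} {m : ℕ} (hm : m ≤ n)

lemma ext_lt (i : ℕ) (hi : i < n) (g : Fin n → Fin k) (x : Fin (n + 1))
    (hx : x.val < m) (hx' : x.val < n) : ext m hm i hi g x = g ⟨x.val, hx'⟩ := by
  simp [ext, hx]

lemma ext_eq (i : ℕ) (hi : i < n) (g : Fin n → Fin k) (x : Fin (n + 1))
    (hx : x.val = m) : ext m hm i hi g x = g ⟨i, hi⟩ := by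
  simp [ext, hx]

lemma ext_gt (i : ℕ) (hi : i < n) (g : Fin n → Fin k) (x : Fin (n + 1))
    (hx : m < x.val) : ext m hm i hi g x = g ⟨x.val - 1, by have := x.isLt; omega⟩ := by
  have h1 : ¬ x.val < m := by omega
  have h2 : ¬ x.val = m := by omega
  simp [ext, h1, h2]

lemma res_ext (i : ℕ) (hi : i < n) (g : Fin n → Fin k) :
    res m (ext m hm i hi g) = g := by
  funext j
  unfold res
  by_cases hj : j.val < m
  · rw [ext_lt hm i hi g _ (by rwa [skip_val_lt _ hj]) (by rw [skip_val_lt _ hj]; exact j.isLt)]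
    exact congrArg g (Fin.ext (skip_val_lt _ hj))
  · rw [ext_gt hm i hi g _ (by rw [skip_val_ge _ hj]; omega)]
    refine congrArg g (Fin.ext ?_)
    show (skip m j).val - 1 = j.val
    rw [skip_val_ge _ hj]; omega

end RStirlingAux

namespace RStirlingAux

section Main

variable {k n m : ℕ}

lemma cond_res (hmn : m < n) (f : A (n + 1) k m) (i : Fin (n + 1)) (hi : i.val < m)
    (hiv : f.1 i = f.1 ⟨m, by omega⟩) :
    Function.Surjective (res m f.1) ∧
      ∀ a b : Fin n, a.val < m → b.val < m → res m f.1 a = res m f.1 b → a = b := by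
  constructor
  · intro y
    obtain ⟨x, hx⟩ := f.2.1 y
    by_cases hxm : x.val = m
    · refine ⟨⟨i.val, by omega⟩, ?_⟩
      show f.1 (skip m ⟨i.val, by omega⟩) = y
      rw [show skip m (⟨i.val, by omega⟩ : Fin n) = i from Fin.ext (skip_val_lt _ hi), hiv,
        show (⟨m, by omega⟩ : Fin (n + 1)) = x from Fin.ext hxm.symm, hx]
    · obtain ⟨j, hj⟩ := skip_surj (by omega) x hxm
      exact ⟨j, by show f.1 (skip m j) = y; rw [hj, hx]⟩
  · intro a b ha hb hab
    have : skip m a = skip m b := f.2.2 _ _ (by rw [skip_val_lt _ ha]; exact ha)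
      (by rw [skip_val_lt _ hb]; exact hb) hab
    exact skip_inj this

lemma cond_ext (hmn : m < n) (i : Fin m) (g : A n k m) :
    Function.Surjective (ext m hmn.le i.val (i.isLt.trans hmn) g.1) ∧
      ∀ a b : Fin (n + 1), a.val < m → b.val < m →
        ext m hmn.le i.val (i.isLt.trans hmn) g.1 a =
          ext m hmn.le i.val (i.isLt.trans hmn) g.1 b → a = b := by
  constructor
  · intro y
    obtain ⟨j, hj⟩ := g.2.1 y
    by_cases hjm : j.val < m
    · refine ⟨⟨j.val, by omega⟩, ?_⟩
      rw [ext_lt hmn.le _ _ g.1 _ hjm j.isLt]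
      rw [← hj]
    · refine ⟨⟨j.val + 1, by omega⟩, ?_⟩
      rw [ext_gt hmn.le _ _ g.1 _ (by simp; omega)]
      rw [← hj]
      exact congrArg g.1 (Fin.ext (by simp))
  · intro a b ha hb hab
    rw [ext_lt hmn.le _ _ g.1 _ ha (by omega), ext_lt hmn.le _ _ g.1 _ hb (by omega)] at hab
    have h2 : (⟨a.val, by omega⟩ : Fin n) = ⟨b.val, by omega⟩ := g.2.2 _ _ ha hb hab
    have h3 := congrArg Fin.val h2
    simp only [Fin.val_mk] at h3
    exact Fin.ext h3

lemma cond_strengthen (hmn : m < n) (f : A (n + 1) k m)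
    (hne : ¬ ∃ i : Fin (n + 1), i.val < m ∧ f.1 i = f.1 ⟨m, by omega⟩) :
    Function.Surjective f.1 ∧
      ∀ a b : Fin (n + 1), a.val < m + 1 → b.val < m + 1 → f.1 a = f.1 b → a = b := by
  refine ⟨f.2.1, fun a b ha hb hab => ?_⟩
  by_cases ham : a.val = m <;> by_cases hbm : b.val = m
  · exact Fin.ext (ham.trans hbm.symm)
  · exfalso
    have ha' : a = ⟨m, by omega⟩ := Fin.ext ham
    exact hne ⟨b, by omega, by rw [← hab, ha']⟩
  · exfalso
    have hb' : b = ⟨m, by omega⟩ := Fin.ext hbm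
    exact hne ⟨a, by omega, by rw [hab, hb']⟩
  · exact f.2.2 a b (by omega) (by omega) hab

lemma ext_res_eq (hmn : m < n) (f : A (n + 1) k m) (i : Fin (n + 1)) (hi : i.val < m)
    (hiv : f.1 i = f.1 ⟨m, by omega⟩) :
    ext m hmn.le i.val (by omega) (res m f.1) = f.1 := by
  funext x
  rcases lt_trichotomy x.val m with hx | hx | hx
  · rw [ext_lt hmn.le _ _ _ _ hx (by omega)]
    show f.1 (skip m ⟨x.val, by omega⟩) = f.1 x
    exact congrArg f.1 (Fin.ext (skip_val_lt _ hx))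
  · rw [ext_eq hmn.le _ _ _ _ hx]
    show f.1 (skip m ⟨i.val, by omega⟩) = f.1 x
    rw [show skip m (⟨i.val, by omega⟩ : Fin n) = i from Fin.ext (skip_val_lt _ hi), hiv]
    exact congrArg f.1 (Fin.ext hx.symm)
  · rw [ext_gt hmn.le _ _ _ _ hx]
    show f.1 (skip m ⟨x.val - 1, by omega⟩) = f.1 x
    refine congrArg f.1 (Fin.ext ?_)
    rw [skip_val_ge _ (by simp; omega)]
    simp; omega

open Classical in
noncomputable def toFun (hmn : m < n) (f : A (n + 1) k m) :
    Quot (@R (n + 1) k (m + 1)) ⊕ (Fin m × Quot (@R n k m)) :=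
  if hex : ∃ i : Fin (n + 1), i.val < m ∧ f.1 i = f.1 ⟨m, by omega⟩ then
    Sum.inr (⟨hex.choose.val, hex.choose_spec.1⟩,
      Quot.mk _ ⟨res m f.1, cond_res hmn f hex.choose hex.choose_spec.1 hex.choose_spec.2⟩)
  else
    Sum.inl (Quot.mk _ ⟨f.1, cond_strengthen hmn f hex⟩)

set_option maxHeartbeats 1000000 in
open Classical in
lemma toFun_resp (hmn : m < n) (f g : A (n + 1) k m) (hfg : R f g) :
    toFun hmn f = toFun hmn g := by
  obtain ⟨σ, hσ⟩ := hfg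
  have hcomp : ∀ x, g.1 x = σ (f.1 x) := fun x => by rw [hσ]; rfl
  by_cases hex : ∃ i : Fin (n + 1), i.val < m ∧ f.1 i = f.1 ⟨m, by omega⟩
  · have hex' : ∃ i : Fin (n + 1), i.val < m ∧ g.1 i = g.1 ⟨m, by omega⟩ := by
      obtain ⟨i, hi, hiv⟩ := hex
      exact ⟨i, hi, by rw [hcomp, hcomp]; exact congrArg σ hiv⟩
    unfold toFun
    rw [dif_pos hex, dif_pos hex']
    have hw : hex.choose = hex'.choose := by
      apply f.2.2 _ _ hex.choose_spec.1 hex'.choose_spec.1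
      have h2' : f.1 hex'.choose = f.1 ⟨m, by omega⟩ :=
        σ.injective (by rw [← hcomp, ← hcomp]; exact hex'.choose_spec.2)
      rw [hex.choose_spec.2, h2']
    have hv : hex.choose.val = hex'.choose.val := by rw [hw]
    congr 1
    refine Prod.ext (Fin.ext hv) ?_
    apply Quot.sound
    exact ⟨σ, funext fun x => hcomp _⟩
  · have hex' : ¬ ∃ i : Fin (n + 1), i.val < m ∧ g.1 i = g.1 ⟨m, by omega⟩ := by
      rintro ⟨i, hi, hiv⟩
      exact hex ⟨i, hi, σ.injective (by rw [← hcomp, ← hcomp]; exact hiv)⟩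
    unfold toFun
    rw [dif_neg hex, dif_neg hex']
    exact congrArg Sum.inl (Quot.sound ⟨σ, hσ⟩)

def fromL (f : A (n + 1) k (m + 1)) : Quot (@R (n + 1) k m) :=
  Quot.mk _ ⟨f.1, f.2.1, fun a b ha hb => f.2.2 a b (by omega) (by omega)⟩

lemma fromL_resp (f g : A (n + 1) k (m + 1)) (hfg : R f g) : fromL f = fromL (m := m) g :=
  Quot.sound ⟨hfg.choose, hfg.choose_spec⟩

def fromR (hmn : m < n) (i : Fin m) (g : A n k m) : Quot (@R (n + 1) k m) :=
  Quot.mk _ ⟨ext m hmn.le i.val (i.isLt.trans hmn) g.1, cond_ext hmn i g⟩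

lemma fromR_resp (hmn : m < n) (i : Fin m) (g g' : A n k m) (hgg : R g g') :
    fromR hmn i g = fromR hmn i g' := by
  obtain ⟨σ, hσ⟩ := hgg
  apply Quot.sound
  refine ⟨σ, ?_⟩
  funext x
  show ext m hmn.le i.val _ g'.1 x = σ (ext m hmn.le i.val _ g.1 x)
  rw [hσ]
  unfold ext
  split_ifs <;> rfl

noncomputable def Φ (hmn : m < n) :
    Quot (@R (n + 1) k m) → Quot (@R (n + 1) k (m + 1)) ⊕ (Fin m × Quot (@R n k m)) :=
  Quot.lift (toFun hmn) (toFun_resp hmn)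

def Ψ (hmn : m < n) :
    Quot (@R (n + 1) k (m + 1)) ⊕ (Fin m × Quot (@R n k m)) → Quot (@R (n + 1) k m) :=
  Sum.elim (Quot.lift fromL fromL_resp)
    (fun pr => Quot.lift (fromR hmn pr.1) (fromR_resp hmn pr.1) pr.2)

set_option maxHeartbeats 1000000 in
open Classical in
lemma left_inv (hmn : m < n) : Function.LeftInverse (Ψ (k := k) hmn) (Φ hmn) := by
  intro q
  induction q using Quot.ind with
  | _ f =>
    show Ψ hmn (toFun hmn f) = Quot.mk _ f
    unfold toFun
    by_cases hex : ∃ i : Fin (n + 1), i.val < m ∧ f.1 i = f.1 ⟨m, by omega⟩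
    · rw [dif_pos hex]
      show fromR hmn _ _ = _
      unfold fromR
      exact congrArg (Quot.mk _) (Subtype.ext
        (ext_res_eq hmn f hex.choose hex.choose_spec.1 hex.choose_spec.2))
    · rw [dif_neg hex]
      exact congrArg (Quot.mk _) (Subtype.ext rfl)

set_option maxHeartbeats 1000000 in
open Classical in
lemma right_inv (hmn : m < n) : Function.RightInverse (Ψ (k := k) hmn) (Φ hmn) := by
  rintro (q | ⟨i, q⟩)
  · induction q using Quot.ind with
    | _ f =>
      show toFun hmn _ = _
      unfold toFun
      have hex : ¬ ∃ i : Fin (n + 1), i.val < m ∧ f.1 i = f.1 ⟨m, by omega⟩ := by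
        rintro ⟨i, hi, hiv⟩
        have h1 : (⟨m, by omega⟩ : Fin (n + 1)).val < m + 1 := Nat.lt_succ_self m
        have h2 := f.2.2 i ⟨m, by omega⟩ (by omega) h1 hiv
        have h3 := congrArg Fin.val h2
        simp only [Fin.val_mk] at h3
        omega
      rw [dif_neg hex]
  · induction q using Quot.ind with
    | _ g =>
      show toFun hmn ⟨ext m hmn.le i.val _ g.1, cond_ext hmn i g⟩ = _
      set F : A (n + 1) k m := ⟨ext m hmn.le i.val (i.isLt.trans hmn) g.1, cond_ext hmn i g⟩
        with hF
      have hwit : (⟨i.val, by omega⟩ : Fin (n + 1)).val < m ∧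
          F.1 ⟨i.val, by omega⟩ = F.1 ⟨m, by omega⟩ := by
        refine ⟨i.isLt, ?_⟩
        rw [show F.1 = ext m hmn.le i.val (i.isLt.trans hmn) g.1 from rfl]
        rw [ext_lt hmn.le _ _ _ _ i.isLt (i.isLt.trans hmn), ext_eq hmn.le _ _ _ _ rfl]
      have hex : ∃ x : Fin (n + 1), x.val < m ∧ F.1 x = F.1 ⟨m, by omega⟩ :=
        ⟨⟨i.val, by omega⟩, hwit⟩
      unfold toFun
      rw [dif_pos hex]
      have hw : hex.choose = ⟨i.val, by omega⟩ :=
        F.2.2 _ _ hex.choose_spec.1 hwit.1 (by rw [hex.choose_spec.2, hwit.2])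
      have hv := congrArg Fin.val hw
      simp only [Fin.val_mk] at hv
      congr 1
      refine Prod.ext (Fin.ext (by simpa using hv)) ?_
      exact congrArg (Quot.mk _) (Subtype.ext (res_ext hmn.le i.val (i.isLt.trans hmn) g.1))

set_option maxHeartbeats 1000000 in
theorem key (hmn : m < n) :
    Nat.card (Quot (@R (n + 1) k m)) =
      Nat.card (Quot (@R (n + 1) k (m + 1))) + m * Nat.card (Quot (@R n k m)) := by
  have e : Quot (@R (n + 1) k m) ≃
      Quot (@R (n + 1) k (m + 1)) ⊕ (Fin m × Quot (@R n k m)) :=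
    ⟨Φ hmn, Ψ hmn, left_inv hmn, right_inv hmn⟩
  rw [Nat.card_congr e, Nat.card_sum, Nat.card_prod, Nat.card_eq_fintype_card (α := Fin m)]
  simp

end Main

end RStirlingAux

theorem rStirling_sub (n k r : ℕ) (hr : 0 < r) (h : r < n) :
    (rStirling n k r : ℤ) =
      rStirling n k (r - 1) - (r - 1 : ℕ) * rStirling (n - 1) k (r - 1) := by
  have hmn : r - 1 < n - 1 := by omega
  have hkey := RStirlingAux.key (k := k) hmn
  rw [show (n - 1) + 1 = n from by omega, show (r - 1) + 1 = r from by omega] at hkey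
  have e1 : rStirling n k r = Nat.card (Quot (@RStirlingAux.R n k r)) := rfl
  have e2 : rStirling n k (r - 1) = Nat.card (Quot (@RStirlingAux.R n k (r - 1))) := rfl
  have e3 : rStirling (n - 1) k (r - 1) =
      Nat.card (Quot (@RStirlingAux.R (n - 1) k (r - 1))) := rfl
  rw [e1, e2, e3, hkey]
  push_cast
  ring
end

section
/- For natural numbers n, r and any real x, (x+r)^n = ∑_{k=0}^{n} S_r(n+r, k+r) · x(x-1)⋯(x-k+1). -/
open Finset

/-!
A surjection `Fin n → Fin k` injective on the first `r` points is an `r`-partition with labelled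
blocks, and relabelling acts freely on these, so there are `S_r(n, k) * k!` of them. Sorting them
by what happens to the last point gives `S_r(n+1, k+1) = (k+1) S_r(n, k+1) + S_r(n, k)` for
`r ≤ n`. Since `(x + r) x⁽ᵏ⁾ = x⁽ᵏ⁺¹⁾ + (k + r) x⁽ᵏ⁾` for the falling factorial `x⁽ᵏ⁾`, this is
exactly the recurrence that the coefficients of `(x + r)ⁿ` satisfy, and induction on `n` concludes.
-/

open Function Nat

def InjOnFirst {n : ℕ} {α : Type*} (r : ℕ) (f : Fin n → α) : Prop :=
  ∀ i j : Fin n, i.val < r → j.val < r → f i = f j → i = j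

section InjOnFirst

variable {n r : ℕ} {α β : Type*}

theorem InjOnFirst.comp {f : Fin n → α} (hf : InjOnFirst r f) {g : α → β} (hg : Injective g) :
    InjOnFirst r (g ∘ f) :=
  fun i j hi hj h => hf i j hi hj (hg h)

theorem InjOnFirst.of_comp {f : Fin n → α} {g : α → β} (h : InjOnFirst r (g ∘ f)) :
    InjOnFirst r f :=
  fun i j hi hj hij => h i j hi hj (congrArg g hij)

theorem injOnFirst_snoc_iff (hr : r ≤ n) {f : Fin n → α} {x : α} :
    InjOnFirst r (Fin.snoc f x : Fin (n + 1) → α) ↔ InjOnFirst r f := by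
  refine ⟨fun h i j hi hj hij => Fin.castSucc_injective n (h _ _ hi hj (by simpa using hij)),
    fun h i j hi hj hij => ?_⟩
  obtain ⟨i, rfl⟩ : ∃ i' : Fin n, i'.castSucc = i := ⟨⟨i, by omega⟩, rfl⟩
  obtain ⟨j, rfl⟩ : ∃ j' : Fin n, j'.castSucc = j := ⟨⟨j, by omega⟩, rfl⟩
  simp only [Fin.snoc_castSucc] at hij
  exact congrArg _ (h i j hi hj hij)

end InjOnFirst

theorem Fin.exists_init_eq_of_surjective {n : ℕ} {α : Type*} {f : Fin (n + 1) → α}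
    (hf : Surjective f) {a : α} (ha : a ≠ f (Fin.last n)) : ∃ i, Fin.init f i = a := by
  obtain ⟨j, rfl⟩ := hf a
  obtain ⟨i, rfl⟩ := Fin.exists_castSucc_eq.2 fun h => ha (congrArg f h)
  exact ⟨i, rfl⟩

def rSurjections (n k r : ℕ) : SubMulAction (Equiv.Perm (Fin k)) (Fin n → Fin k) where
  carrier := {f | Surjective f ∧ InjOnFirst r f}
  smul_mem' σ _ hf := ⟨σ.surjective.comp hf.1, hf.2.comp σ.injective⟩

namespace rSurjections

variable {n k r : ℕ}

theorem coe_smul (σ : Equiv.Perm (Fin k)) (f : rSurjections n k r) :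
    ((σ • f : rSurjections n k r) : Fin n → Fin k) = σ ∘ f :=
  rfl

theorem stabilizer_eq_bot (f : rSurjections n k r) :
    MulAction.stabilizer (Equiv.Perm (Fin k)) f = ⊥ := by
  refine (Subgroup.eq_bot_iff_forall _).2 fun σ hσ => Equiv.ext fun y => ?_
  obtain ⟨x, rfl⟩ := f.2.1 y
  exact congr_fun (congr_arg Subtype.val hσ) x

instance isPretransitive_self : MulAction.IsPretransitive (Equiv.Perm (Fin n)) (rSurjections n n r) := by
  refine ⟨fun f g => ?_⟩
  have bij (h : rSurjections n n r) : Bijective (h : Fin n → Fin n) :=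
    Finite.injective_iff_bijective.1 (Finite.injective_iff_surjective.2 h.2.1)
  refine ⟨Equiv.ofBijective g (bij g) * (Equiv.ofBijective f (bij f))⁻¹, Subtype.ext ?_⟩
  ext x
  simp

end rSurjections

theorem rStirling_eq_card_quotient (n k r : ℕ) :
    rStirling n k r =
      Nat.card (MulAction.orbitRel.Quotient (Equiv.Perm (Fin k)) (rSurjections n k r)) :=
  Nat.card_congr <| Quot.congrRight fun (f g : rSurjections n k r) => by
    rw [MulAction.orbitRel_apply, MulAction.mem_orbit_iff]
    exact ⟨fun ⟨σ, h⟩ => ⟨σ⁻¹, Subtype.ext (by rw [rSurjections.coe_smul, h]; ext; simp)⟩,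
      fun ⟨σ, h⟩ => ⟨σ⁻¹, by rw [← h, rSurjections.coe_smul]; ext; simp⟩⟩

theorem rSurjections.card_eq_rStirling_mul_factorial (n k r : ℕ) :
    Nat.card (rSurjections n k r) = rStirling n k r * k ! := by
  rw [Nat.card_congr (MulAction.selfEquivOrbitsQuotientProd stabilizer_eq_bot), Nat.card_prod,
    rStirling_eq_card_quotient, Nat.card_perm, Nat.card_fin]

theorem rStirling_eq_zero_of_isEmpty {n k r : ℕ} (h : IsEmpty (rSurjections n k r)) :
    rStirling n k r = 0 := by
  have := rSurjections.card_eq_rStirling_mul_factorial n k r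
  rw [Nat.card_of_isEmpty] at this
  exact (Nat.mul_eq_zero.1 this.symm).resolve_right (factorial_ne_zero k)

theorem rStirling_eq_zero_of_lt {n k : ℕ} (h : n < k) (r : ℕ) : rStirling n k r = 0 :=
  rStirling_eq_zero_of_isEmpty ⟨fun f => (Fintype.card_le_of_surjective _ f.2.1).not_gt (by simpa)⟩

theorem rStirling_eq_zero_of_lt_of_le {n k r : ℕ} (hk : k < r) (hr : r ≤ n) :
    rStirling n k r = 0 :=
  rStirling_eq_zero_of_isEmpty ⟨fun f => by
    have : Injective fun i : Fin r => f.1 (Fin.castLE hr i) := fun i j h =>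
      Fin.castLE_injective hr (f.2.2 _ _ i.2 j.2 h)
    exact (Fintype.card_le_of_injective _ this).not_gt (by simpa)⟩

theorem rStirling_succ_zero (n r : ℕ) : rStirling (n + 1) 0 r = 0 :=
  rStirling_eq_zero_of_isEmpty ⟨fun f => (f.1 0).elim0⟩

theorem rStirling_self (n r : ℕ) : rStirling n n r = 1 := by
  rw [rStirling_eq_card_quotient, Nat.card_eq_one_iff_unique,
    ← MulAction.pretransitive_iff_subsingleton_quotient]
  exact ⟨inferInstance, ⟨Quot.mk _ ⟨id, surjective_id, fun i j _ _ h => h⟩⟩⟩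

namespace rSurjections

variable {n k r : ℕ}

theorem snoc_mem (hr : r ≤ n) {g : Fin n → Fin (k + 1)} (hg : g ∈ rSurjections n (k + 1) r)
    (v : Fin (k + 1)) :
    (Fin.snoc g v : Fin (n + 1) → Fin (k + 1)) ∈ rSurjections (n + 1) (k + 1) r :=
  ⟨fun w => let ⟨i, hi⟩ := hg.1 w; ⟨i.castSucc, by simpa using hi⟩,
    (injOnFirst_snoc_iff hr).2 hg.2⟩

theorem snoc_succAbove_mem (hr : r ≤ n) {g : Fin n → Fin k} (hg : g ∈ rSurjections n k r)
    (v : Fin (k + 1)) :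
    (Fin.snoc (v.succAbove ∘ g) v : Fin (n + 1) → Fin (k + 1)) ∈ rSurjections (n + 1) (k + 1) r := by
  refine ⟨fun w => ?_, (injOnFirst_snoc_iff hr).2 (hg.2.comp Fin.succAbove_right_injective)⟩
  rcases eq_or_ne w v with rfl | hw
  · exact ⟨Fin.last n, by simp⟩
  · obtain ⟨u, rfl⟩ := Fin.exists_succAbove_eq hw
    obtain ⟨i, rfl⟩ := hg.1 u
    exact ⟨i.castSucc, by simp⟩

/-- The last point either joins the block labelled `v` of a partition of the other points, or
forms a new block labelled `v`, the other blocks being relabelled by `Fin.succAbove v`. -/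
def extendLast (hr : r ≤ n) :
    (rSurjections n (k + 1) r × Fin (k + 1)) ⊕ (Fin (k + 1) × rSurjections n k r) →
      rSurjections (n + 1) (k + 1) r
  | .inl (g, v) => ⟨Fin.snoc g v, snoc_mem hr g.2 v⟩
  | .inr (v, g) => ⟨Fin.snoc (v.succAbove ∘ g) v, snoc_succAbove_mem hr g.2 v⟩

theorem extendLast_injective (hr : r ≤ n) : Injective (extendLast (k := k) hr) := by
  rintro (⟨g, v⟩ | ⟨v, g⟩) (⟨g', v'⟩ | ⟨v', g'⟩) h <;>
    simp only [extendLast, Subtype.mk.injEq, Fin.snoc_inj] at h <;>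
    obtain ⟨hg, rfl⟩ := h
  · rw [Subtype.ext hg]
  · obtain ⟨i, hi⟩ := g.2.1 v
    exact absurd (hg ▸ hi) (Fin.succAbove_ne _ _)
  · obtain ⟨i, hi⟩ := g'.2.1 v
    exact absurd (hg ▸ hi) (Fin.succAbove_ne _ _)
  · rw [Subtype.ext (Fin.succAbove_right_injective.comp_left hg)]

theorem extendLast_surjective (hr : r ≤ n) : Surjective (extendLast (k := k) hr) := by
  intro f
  have hinit : InjOnFirst r (Fin.init f.1) := by
    rw [← injOnFirst_snoc_iff hr (x := f.1 (Fin.last n)), Fin.snoc_init_self]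
    exact f.2.2
  by_cases hsurj : Surjective (Fin.init f.1)
  · exact ⟨.inl (⟨_, hsurj, hinit⟩, f.1 (Fin.last n)), Subtype.ext (Fin.snoc_init_self f.1)⟩
  have hne (i : Fin n) : Fin.init f.1 i ≠ f.1 (Fin.last n) := fun hi => hsurj fun w => by
    rcases eq_or_ne w (f.1 (Fin.last n)) with rfl | hw
    · exact ⟨i, hi⟩
    · exact Fin.exists_init_eq_of_surjective f.2.1 hw
  choose g hg using fun i => Fin.exists_succAbove_eq (hne i)
  have hg' : (f.1 (Fin.last n)).succAbove ∘ g = Fin.init f.1 := funext hg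
  have hgsurj : Surjective g := fun w => by
    obtain ⟨i, hi⟩ := Fin.exists_init_eq_of_surjective f.2.1 (Fin.succAbove_ne _ w)
    exact ⟨i, Fin.succAbove_right_injective ((hg i).trans hi)⟩
  refine ⟨.inr (f.1 (Fin.last n), ⟨g, hgsurj, InjOnFirst.of_comp (hg' ▸ hinit)⟩), Subtype.ext ?_⟩
  simp only [extendLast, hg', Fin.snoc_init_self]

theorem card_succ_succ (hr : r ≤ n) :
    Nat.card (rSurjections (n + 1) (k + 1) r) =
      (k + 1) * (Nat.card (rSurjections n (k + 1) r) + Nat.card (rSurjections n k r)) := by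
  rw [← Nat.card_eq_of_bijective _ ⟨extendLast_injective hr, extendLast_surjective hr⟩,
    Nat.card_sum, Nat.card_prod, Nat.card_prod, Nat.card_fin]
  ring

end rSurjections

theorem rStirling_succ_succ {n k r : ℕ} (hr : r ≤ n) :
    rStirling (n + 1) (k + 1) r = (k + 1) * rStirling n (k + 1) r + rStirling n k r := by
  have h := rSurjections.card_succ_succ (k := k) hr
  simp only [rSurjections.card_eq_rStirling_mul_factorial, factorial_succ] at h
  exact Nat.eq_of_mul_eq_mul_right (factorial_pos (k + 1)) (by rw [factorial_succ, h]; ring)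

theorem rStirling_add_succ_add (n k r : ℕ) :
    rStirling (n + 1 + r) (k + 1 + r) r =
      (k + 1 + r) * rStirling (n + r) (k + 1 + r) r + rStirling (n + r) (k + r) r := by
  rw [show n + 1 + r = n + r + 1 by omega, show k + 1 + r = k + r + 1 by omega]
  exact rStirling_succ_succ (by omega)

theorem rStirling_add_succ_self (n r : ℕ) :
    rStirling (n + 1 + r) r r = r * rStirling (n + r) r r := by
  cases r with
  | zero => simp [rStirling_succ_zero]
  | succ s =>
    have hle : s + 1 ≤ n + (s + 1) := by omega
    rw [show n + 1 + (s + 1) = n + (s + 1) + 1 by omega, rStirling_succ_succ hle,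
      rStirling_eq_zero_of_lt_of_le s.lt_succ_self hle, add_zero]

theorem add_mul_prod_range_sub {R : Type*} [CommRing R] (x y : R) (k : ℕ) :
    (x + y) * ∏ i ∈ range k, (x - i) =
      ∏ i ∈ range (k + 1), (x - i) + (k + y) * ∏ i ∈ range k, (x - i) := by
  rw [prod_range_succ]
  ring

theorem add_pow_eq_sum_rStirling_fallingFactorial (n r : ℕ) (x : ℝ) :
    (x + r) ^ n = ∑ k ∈ Finset.range (n + 1),
      (rStirling (n + r) (k + r) r : ℝ) * ∏ i ∈ Finset.range k, (x - i) := by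
  set F : ℕ → ℝ := fun k => ∏ i ∈ range k, (x - i)
  induction n with
  | zero => simp [rStirling_self]
  | succ n ih =>
    calc (x + r) ^ (n + 1)
        = ∑ k ∈ range (n + 1), ((rStirling (n + r) (k + r) r : ℝ) * F (k + 1)
            + (k + r) * (rStirling (n + r) (k + r) r : ℝ) * F k) := by
          rw [pow_succ, ih, sum_mul]
          refine sum_congr rfl fun k _ => ?_
          rw [mul_assoc, mul_comm _ (x + r), add_mul_prod_range_sub]
          ring
      _ = ∑ k ∈ range (n + 1), (rStirling (n + r) (k + r) r : ℝ) * F (k + 1)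
            + ∑ k ∈ range (n + 2), (k + r) * (rStirling (n + r) (k + r) r : ℝ) * F k := by
          rw [sum_add_distrib, sum_range_succ _ (n + 1),
            rStirling_eq_zero_of_lt (by omega : n + r < n + 1 + r)]
          simp
      _ = ∑ k ∈ range (n + 2), (rStirling (n + 1 + r) (k + r) r : ℝ) * F k := by
          rw [sum_range_succ' _ (n + 1), sum_range_succ' _ (n + 1)]
          simp only [rStirling_add_succ_add, zero_add, rStirling_add_succ_self, Nat.cast_add,
            Nat.cast_mul, add_mul, sum_add_distrib]
          ring
end
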